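/- Let H be a self-adjoint operator with unique ground state ψ₀ of energy 0 and spectral gap γ, and let C be an operator with ⟨ψ₀, C ψ₀⟩ = 0. Then ‖(C)_α ψ₀‖ ≤ e^{−γ²/(4α)} ‖C‖, where (C)_α = √(α/π) ∫ e^{itH} C e^{-itH} e^{-αt²} dt. -/

import Mathlib

/-!
Since `H ψ₀ = 0`, `e^{-itH}` fixes `ψ₀`, so `(C)_α ψ₀` is the Gaussian average of
`t ↦ e^{itH} (C ψ₀)`. Along an eigenvector of `H` with eigenvalue `μ` this average multiplies the
component of `C ψ₀` by `√(α/π) ∫ e^{iμt} e^{-αt²} dt = e^{-μ²/(4α)}`, the Fourier transform of a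
Gaussian. The component along the ground state (`μ = 0`) is `⟨ψ₀, C ψ₀⟩ = 0`, and every other
eigenvalue is at least `γ`, so each component shrinks by a factor `e^{-γ²/(4α)}`; Parseval and
`‖C ψ₀‖ ≤ ‖C‖` conclude.
-/

open MeasureTheory Complex
open scoped InnerProductSpace

theorem NormedSpace.exp_apply_of_apply_eq_smul {𝕜 E : Type*} [RCLike 𝕜] [NormedAddCommGroup E]
    [NormedSpace 𝕜 E] [CompleteSpace E] {A : E →L[𝕜] E} {v : E} {μ : 𝕜} (h : A v = μ • v) :
    NormedSpace.exp A v = NormedSpace.exp μ • v := by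
  have hpow (n : ℕ) : (A ^ n) v = μ ^ n • v := by
    induction n with
    | zero => simp
    | succ n ih => rw [pow_succ, mul_apply_eq_comp, h, map_smul, ih, smul_smul, pow_succ']
  refine ((exp_series_hasSum_exp' (𝕂 := 𝕜) A).mapL (ContinuousLinearMap.apply 𝕜 E v)).unique ?_
  simpa [hpow, smul_smul] using (exp_series_hasSum_exp' (𝕂 := 𝕜) μ).smul_const v

/-- The paper's `(C)_α` is `gaussianAverage α fun t => e^{itH} * C * e^{-itH}`. -/
noncomputable def gaussianAverage {F : Type*} [NormedAddCommGroup F] [NormedSpace ℝ F] (α : ℝ)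
    (f : ℝ → F) : F :=
  Real.sqrt (α / Real.pi) • ∫ t : ℝ, Real.exp (-(α * t ^ 2)) • f t

theorem ContinuousLinearMap.gaussianAverage_apply {F G : Type*} [NormedAddCommGroup F]
    [NormedSpace ℂ F] [NormedAddCommGroup G] [NormedSpace ℂ G] [CompleteSpace G] {α : ℝ}
    {f : ℝ → F →L[ℂ] G} (hf : Integrable fun t : ℝ => Real.exp (-(α * t ^ 2)) • f t) (v : F) :
    gaussianAverage α f v = gaussianAverage α fun t => f t v := by
  rw [gaussianAverage, gaussianAverage, smul_apply, integral_apply hf]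
  rfl

theorem continuous_exp_I_mul_smul_conj {A : Type*} [NormedRing A] [NormedAlgebra ℂ A]
    [CompleteSpace A] (H C : A) :
    Continuous fun t : ℝ =>
      NormedSpace.exp ((I * t) • H) * C * NormedSpace.exp (-(I * t) • H) := by
  let +nondep : NormedAlgebra ℚ A := .restrictScalars ℚ ℂ A
  fun_prop

section CStarAlgebra

variable {A : Type*} [NormedRing A] [NormedAlgebra ℂ A] [StarRing A] [CStarRing A]
  [StarModule ℂ A] {H : A}

theorem IsSelfAdjoint.star_exp_I_mul_smul (hH : IsSelfAdjoint H) (t : ℝ) :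
    star (NormedSpace.exp ((I * t) • H)) = NormedSpace.exp (-(I * t) • H) := by
  rw [NormedSpace.star_exp, star_smul, hH.star_eq, star_mul', Complex.star_def, conj_I,
    conj_ofReal, neg_mul]

theorem IsSelfAdjoint.exp_I_mul_smul_mem_unitary [CompleteSpace A] (hH : IsSelfAdjoint H)
    (t : ℝ) :
    NormedSpace.exp ((I * t) • H) ∈ unitary A := by
  let +nondep : NormedAlgebra ℚ A := .restrictScalars ℚ ℂ A
  refine NormedSpace.exp_mem_unitary_of_mem_skewAdjoint (hH.smul_mem_skewAdjoint ?_)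
  rw [skewAdjoint.mem_iff, star_mul', Complex.star_def, conj_I, conj_ofReal]
  ring

theorem IsSelfAdjoint.norm_exp_I_mul_smul_conj [CompleteSpace A] (hH : IsSelfAdjoint H) (C : A)
    (t : ℝ) :
    ‖NormedSpace.exp ((I * t) • H) * C * NormedSpace.exp (-(I * t) • H)‖ = ‖C‖ := by
  have hU := hH.exp_I_mul_smul_mem_unitary t
  rw [← hH.star_exp_I_mul_smul, CStarRing.norm_mul_mem_unitary _ (Unitary.star_mem hU),
    CStarRing.norm_mem_unitary_mul _ hU]

theorem IsSelfAdjoint.integrable_gaussian_smul_exp_conj [CompleteSpace A] (hH : IsSelfAdjoint H)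
    (C : A) {α : ℝ} (hα : 0 < α) :
    Integrable fun t : ℝ => Real.exp (-(α * t ^ 2)) •
      (NormedSpace.exp ((I * t) • H) * C * NormedSpace.exp (-(I * t) • H)) := by
  have hgauss : Integrable fun t : ℝ => Real.exp (-(α * t ^ 2)) := by
    simpa only [neg_mul] using integrable_exp_neg_mul_sq hα
  exact hgauss.smul_bdd ‖C‖ (continuous_exp_I_mul_smul_conj H C).aestronglyMeasurable
    (.of_forall fun t => (hH.norm_exp_I_mul_smul_conj C t).le)

end CStarAlgebra

theorem OrthonormalBasis.norm_le_of_forall_norm_inner_le {ι 𝕜 E : Type*} [Fintype ι] [RCLike 𝕜]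
    [NormedAddCommGroup E] [InnerProductSpace 𝕜 E] (b : OrthonormalBasis ι 𝕜 E) {v w : E} {K : ℝ}
    (hK : 0 ≤ K) (h : ∀ i, ‖⟪b i, v⟫_𝕜‖ ≤ K * ‖⟪b i, w⟫_𝕜‖) : ‖v‖ ≤ K * ‖w‖ := by
  refine (pow_le_pow_iff_left₀ (norm_nonneg _) (by positivity) two_ne_zero).1 ?_
  rw [mul_pow, ← b.sum_sq_norm_inner_right, ← b.sum_sq_norm_inner_right, Finset.mul_sum]
  gcongr with i
  rw [← mul_pow]
  gcongr
  exact h i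

section Hilbert

variable {E : Type*} [NormedAddCommGroup E] [InnerProductSpace ℂ E] [CompleteSpace E]
  {H : E →L[ℂ] E}

theorem IsSelfAdjoint.inner_exp_I_mul_smul_apply (hH : IsSelfAdjoint H) {b : E} {μ : ℝ}
    (hb : H b = (μ : ℂ) • b) (t : ℝ) (w : E) :
    ⟪b, NormedSpace.exp ((I * t) • H) w⟫_ℂ = cexp (I * μ * t) * ⟪b, w⟫_ℂ := by
  have hb' : (-(I * t) • H) b = (-(I * t) * μ) • b := by
    rw [smul_apply, hb, smul_smul]
  rw [← ContinuousLinearMap.adjoint_inner_left, ← ContinuousLinearMap.star_eq_adjoint,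
    hH.star_exp_I_mul_smul, NormedSpace.exp_apply_of_apply_eq_smul hb', inner_smul_left,
    ← Complex.exp_eq_exp_ℂ, ← Complex.exp_conj]
  congr 2
  simp only [map_mul, map_neg, conj_I, conj_ofReal]
  ring

theorem IsSelfAdjoint.integrable_gaussian_smul_exp_apply (hH : IsSelfAdjoint H) (w : E) {α : ℝ}
    (hα : 0 < α) :
    Integrable fun t : ℝ => Real.exp (-(α * t ^ 2)) • NormedSpace.exp ((I * t) • H) w := by
  have hgauss : Integrable fun t : ℝ => Real.exp (-(α * t ^ 2)) := by
    simpa only [neg_mul] using integrable_exp_neg_mul_sq hα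
  let +nondep : NormedAlgebra ℚ (E →L[ℂ] E) := .restrictScalars ℚ ℂ _
  exact hgauss.smul_bdd ‖w‖ (by fun_prop : Continuous _).aestronglyMeasurable
    (.of_forall fun t =>
      (ContinuousLinearMap.norm_map_of_mem_unitary (hH.exp_I_mul_smul_mem_unitary t) w).le)

theorem IsSelfAdjoint.inner_gaussianAverage_exp_I_mul_smul_apply (hH : IsSelfAdjoint H) {b : E}
    {μ : ℝ} (hb : H b = (μ : ℂ) • b) (w : E) {α : ℝ} (hα : 0 < α) :
    ⟪b, gaussianAverage α fun t => NormedSpace.exp ((I * t) • H) w⟫_ℂ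
      = Real.exp (-(μ ^ 2 / (4 * α))) * ⟪b, w⟫_ℂ := by
  have hpt (t : ℝ) : ⟪b, Real.exp (-(α * t ^ 2)) • NormedSpace.exp ((I * t) • H) w⟫_ℂ
      = cexp (I * μ * t) * cexp (-α * t ^ 2) * ⟪b, w⟫_ℂ := by
    rw [inner_smul_right_eq_smul, hH.inner_exp_I_mul_smul_apply hb, Complex.real_smul,
      ofReal_exp]
    push_cast
    rw [neg_mul]
    ring
  have hfourier := fourierIntegral_gaussian (b := (α : ℂ)) (by simpa using hα) (μ : ℂ)
  rw [gaussianAverage, inner_smul_right_eq_smul,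
    ← integral_inner (hH.integrable_gaussian_smul_exp_apply w hα)]
  simp_rw [hpt]
  rw [integral_mul_const, hfourier]
  have hsqrt : ((Real.pi : ℂ) / α) ^ (1 / 2 : ℂ) = (Real.sqrt (Real.pi / α) : ℂ) := by
    rw [Real.sqrt_eq_rpow, ofReal_cpow (by positivity)]
    norm_num
  have hnormalize : (Real.sqrt (α / Real.pi) * Real.sqrt (Real.pi / α) : ℂ) = 1 := by
    have : α / Real.pi * (Real.pi / α) = 1 := by field_simp
    rw [← ofReal_mul, ← Real.sqrt_mul (by positivity), this, Real.sqrt_one, ofReal_one]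
  rw [hsqrt, Complex.real_smul, ofReal_exp]
  push_cast
  rw [neg_div]
  linear_combination (cexp (-(μ ^ 2 / (4 * α))) * ⟪b, w⟫_ℂ) * hnormalize

end Hilbert

theorem stmt_3_general {E : Type*} [NormedAddCommGroup E] [InnerProductSpace ℂ E]
    [FiniteDimensional ℂ E] (H C : E →L[ℂ] E) (hH : IsSelfAdjoint H)
    (ψ₀ : E) (hψ : ‖ψ₀‖ = 1) (hgs : H ψ₀ = 0)
    (hker : ∀ v : E, H v = 0 → ∃ c : ℂ, v = c • ψ₀)
    (γ : ℝ) (hγ : 0 < γ)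
    (hgap : ∀ μ : ℝ, Module.End.HasEigenvalue (H : E →ₗ[ℂ] E) (μ : ℂ) → μ = 0 ∨ γ ≤ μ)
    (hexp : ⟪ψ₀, C ψ₀⟫_ℂ = 0)
    (α : ℝ) (hα : 0 < α) :
    ‖(Real.sqrt (α / Real.pi) •
        ∫ t : ℝ, Real.exp (-(α * t ^ 2)) •
          (NormedSpace.exp ((Complex.I * t) • H) * C *
            NormedSpace.exp ((-(Complex.I * t)) • H))) ψ₀‖
      ≤ Real.exp (-(γ ^ 2 / (4 * α))) * ‖C‖ := by
  have hfix (t : ℝ) : NormedSpace.exp (-(I * t) • H) ψ₀ = ψ₀ := by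
    simpa using NormedSpace.exp_apply_of_apply_eq_smul (A := -(I * t) • H) (μ := 0)
      (by simp [hgs])
  change ‖gaussianAverage α (fun t : ℝ => NormedSpace.exp ((I * t) • H) * C *
    NormedSpace.exp (-(I * t) • H)) ψ₀‖ ≤ _
  rw [ContinuousLinearMap.gaussianAverage_apply (hH.integrable_gaussian_smul_exp_conj C hα)]
  simp only [mul_apply_eq_comp, hfix]
  have hsym := hH.isSymmetric
  set b := hsym.eigenvectorBasis rfl
  set μ := hsym.eigenvalues rfl
  have hb (i) : H (b i) = (μ i : ℂ) • b i := hsym.apply_eigenvectorBasis rfl i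
  refine (b.norm_le_of_forall_norm_inner_le (Real.exp_pos _).le fun i => ?_).trans
    (mul_le_mul_of_nonneg_left (by simpa [hψ] using C.le_opNorm ψ₀) (Real.exp_pos _).le)
  rw [hH.inner_gaussianAverage_exp_I_mul_smul_apply (hb i) _ hα, norm_mul, norm_real,
    Real.norm_of_nonneg (Real.exp_pos _).le]
  rcases hgap (μ i) (Module.End.hasEigenvalue_of_hasEigenvector
    (hsym.hasEigenvector_eigenvectorBasis rfl i)) with hzero | hge
  · obtain ⟨c, hc⟩ := hker (b i) (by rw [hb, hzero, ofReal_zero, zero_smul])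
    rw [hc, inner_smul_left, hexp, mul_zero, norm_zero, mul_zero, mul_zero]
  · gcongr

theorem stmt_3 {E : Type*} [NormedAddCommGroup E] [InnerProductSpace ℂ E]
    [FiniteDimensional ℂ E] (H C : E →L[ℂ] E) (hH : IsSelfAdjoint H)
    (hpos : ∀ v : E, 0 ≤ (⟪v, H v⟫_ℂ).re)
    (ψ₀ : E) (hψ : ‖ψ₀‖ = 1) (hgs : H ψ₀ = 0)
    (hker : ∀ v : E, H v = 0 → ∃ c : ℂ, v = c • ψ₀)
    (γ : ℝ) (hγ : 0 < γ)
    (hgap : ∀ μ : ℝ, Module.End.HasEigenvalue (H : E →ₗ[ℂ] E) (μ : ℂ) → μ = 0 ∨ γ ≤ μ)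
    (hexp : ⟪ψ₀, C ψ₀⟫_ℂ = 0)
    (α : ℝ) (hα : 0 < α) :
    ‖(Real.sqrt (α / Real.pi) •
        ∫ t : ℝ, Real.exp (-(α * t ^ 2)) •
          (NormedSpace.exp ((Complex.I * t) • H) * C *
            NormedSpace.exp ((-(Complex.I * t)) • H))) ψ₀‖
      ≤ Real.exp (-(γ ^ 2 / (4 * α))) * ‖C‖ :=
  stmt_3_general H C hH ψ₀ hψ hgs hker γ hγ hgap hexp α hα
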